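/- arXiv:2102.05214 — 6 statements merged into one kernel-verified Lean document; each statement's English description precedes it below -/
import Mathlib

section
/- Let A, B, M be positive semidefinite matrices of the same size and let C = A - B. Then A M A + 7 C M C ⪰ (1/2) B M B in the Loewner order. -/
/-! With `B = A - C`, the matrix `A M A + 7 C M C - ½ B M B` equals
`½ (A + C) M (A + C) + 6 C M C`, a nonnegative combination of congruences of `M` by the
Hermitian matrices `A + C` and `C`. -/

theorem mul_mul_add_seven_smul_sub_half_smul_eq {R : Type*} [Ring R] [Algebra ℝ R] (A C M : R) :
    A * M * A + (7 : ℝ) • (C * M * C) - (1 / 2 : ℝ) • ((A - C) * M * (A - C)) =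
      (1 / 2 : ℝ) • ((A + C) * M * (A + C)) + (6 : ℝ) • (C * M * C) := by
  simp only [mul_sub, sub_mul, mul_add, add_mul]
  module

theorem Matrix.PosSemidef.mul_mul_same_of_isHermitian {n R : Type*} [Fintype n] [Ring R]
    [PartialOrder R] [StarRing R] {M X : Matrix n n R} (hM : M.PosSemidef) (hX : X.IsHermitian) :
    (X * M * X).PosSemidef := by
  simpa only [hX.eq] using hM.conjTranspose_mul_mul_same X

/-- For PSD matrices `A`, `B`, `M` with `C = A - B`,
`A M A + 7 C M C ⪰ (1/2) B M B` in the Loewner order. -/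
theorem psd_square_order {d : ℕ} (A B M : Matrix (Fin d) (Fin d) ℝ)
    (hA : A.PosSemidef) (hB : B.PosSemidef) (hM : M.PosSemidef)
    (C : Matrix (Fin d) (Fin d) ℝ) (hC : C = A - B) :
    (A * M * A + (7 : ℝ) • (C * M * C) - (1 / 2 : ℝ) • (B * M * B)).PosSemidef := by
  have hBC : B = A - C := by rw [hC, sub_sub_cancel]
  have hCh : C.IsHermitian := hC ▸ hA.1.sub hB.1
  rw [hBC, mul_mul_add_seven_smul_sub_half_smul_eq]
  exact ((hM.mul_mul_same_of_isHermitian (hA.1.add hCh)).smul (by norm_num)).add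
    ((hM.mul_mul_same_of_isHermitian hCh).smul (by norm_num))
end

section
/- Suppose ‖Aᵏ‖_op ≤ τ ρᵏ for all k ≥ 0 and ‖Δ‖_op ≤ ε. Then for every k ≥ 1, ‖(A + Δ)ᵏ‖_op ≤ τ (ρ + τ ε)ᵏ. -/
/-- The ℓ₂ → ℓ₂ operator (spectral) norm of a matrix. -/
noncomputable def opNorm {𝕜 : Type*} [RCLike 𝕜] {m n : Type*} [Fintype m] [Fintype n]
    [DecidableEq n] (M : Matrix m n 𝕜) : ℝ :=
  ‖(Matrix.toEuclideanLin M).toContinuousLinearMap‖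

open scoped Matrix.Norms.L2Operator

lemma opNorm_eq_norm {d : ℕ} (M : Matrix (Fin d) (Fin d) ℝ) : opNorm M = ‖M‖ := rfl

lemma pow_add_expand {R : Type*} [Ring R] (A Δ : R) (k : ℕ) :
    (A + Δ) ^ k = A ^ k + ∑ j ∈ Finset.range k, A ^ j * Δ * (A + Δ) ^ (k - 1 - j) := by
  induction k with
  | zero => simp
  | succ k ih =>
    rw [pow_succ' (A + Δ) k, Finset.sum_range_succ']
    simp only [Nat.add_sub_cancel, Nat.sub_zero, pow_zero, one_mul]
    conv_lhs => rw [ih]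
    conv_rhs => rw [ih]
    simp only [Nat.sub_sub, Nat.add_comm 1, mul_add, add_mul, Finset.mul_sum,
      Finset.sum_add_distrib, pow_succ', mul_assoc]
    abel

/-- If `‖Aᵏ‖_op ≤ τ ρᵏ` for all `k ≥ 0` and `‖Δ‖_op ≤ ε`, then for every `k ≥ 1`,
`‖(A + Δ)ᵏ‖_op ≤ τ (ρ + τ ε)ᵏ`. -/
theorem perturbed_power_bound {d : ℕ} (A Δ : Matrix (Fin d) (Fin d) ℝ) (τ ρ ε : ℝ)
    (hτ : 0 < τ) (hρ : 0 < ρ) (hε : 0 < ε)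
    (hA : ∀ k : ℕ, opNorm (A ^ k) ≤ τ * ρ ^ k) (hΔ : opNorm Δ ≤ ε) :
    ∀ k : ℕ, 1 ≤ k → opNorm ((A + Δ) ^ k) ≤ τ * (ρ + τ * ε) ^ k := by
  simp only [opNorm_eq_norm] at hA hΔ ⊢
  set σ : ℝ := ρ + τ * ε with hσ
  have hσpos : 0 < σ := by positivity
  have key : ∀ k : ℕ, ‖(A + Δ) ^ k‖ ≤ τ * σ ^ k := by
    intro k
    induction k using Nat.strong_induction_on with
    | _ k ih =>
      match k with
      | 0 => simpa using hA 0
      | (k + 1) =>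
        have step1 : ‖(A + Δ) ^ (k + 1)‖ ≤
            τ * ρ ^ (k + 1) + ∑ j ∈ Finset.range (k + 1),
              (τ * ρ ^ j) * ε * (τ * σ ^ (k - j)) := by
          rw [pow_add_expand A Δ (k + 1)]
          refine (norm_add_le _ _).trans ?_
          gcongr
          · exact hA (k + 1)
          refine (norm_sum_le _ _).trans ?_
          refine Finset.sum_le_sum fun j hj => ?_
          have hj' : j < k + 1 := Finset.mem_range.mp hj
          have h1 : ‖A ^ j * Δ * (A + Δ) ^ (k + 1 - 1 - j)‖ ≤
              ‖A ^ j‖ * ‖Δ‖ * ‖(A + Δ) ^ (k + 1 - 1 - j)‖ :=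
            (norm_mul_le _ _).trans (by gcongr; exact norm_mul_le _ _)
          have h2 : k + 1 - 1 - j = k - j := by omega
          rw [h2] at h1
          refine h1.trans ?_
          exact mul_le_mul (mul_le_mul (hA j) hΔ (norm_nonneg _) (by positivity))
            (ih (k - j) (by omega)) (norm_nonneg _) (by positivity)
        have geo : (∑ j ∈ Finset.range (k + 1), ρ ^ j * σ ^ (k - j)) * (σ - ρ)
            = σ ^ (k + 1) - ρ ^ (k + 1) := by
          rw [← geom_sum₂_mul σ ρ (k + 1)]
          congr 1
          rw [← Finset.sum_range_reflect (fun i => σ ^ i * ρ ^ (k + 1 - 1 - i)) (k + 1)]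
          refine Finset.sum_congr rfl fun j hj => ?_
          have hj' : j < k + 1 := Finset.mem_range.mp hj
          have e1 : k + 1 - 1 - j = k - j := by omega
          have e2 : k + 1 - 1 - (k - j) = j := by omega
          rw [e1, e2]
          ring
        have hsum : ∑ j ∈ Finset.range (k + 1), (τ * ρ ^ j) * ε * (τ * σ ^ (k - j))
            = τ * τ * ε * ∑ j ∈ Finset.range (k + 1), ρ ^ j * σ ^ (k - j) := by
          rw [Finset.mul_sum]; exact Finset.sum_congr rfl fun j _ => by ring
        have hsub : σ - ρ = τ * ε := by rw [hσ]; ring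
        rw [hsub] at geo
        refine step1.trans ?_
        rw [hsum]
        nlinarith [geo]
  exact fun k _ => key k
end

section
/- Let Z ∈ ℝ^d be a square-integrable random vector, μ ∈ ℝ^d, r ≥ 0, and let E be the event {‖Z − μ‖₂ ≤ r}. Then for any positive semidefinite matrix M, E[‖Z − E[Z | E]‖_M² | E] ≥ E[‖Z − E[Z]‖_M²] − 4 ‖M‖_op E[1_{Eᶜ} ‖Z − μ‖₂²], assuming P(E) > 0. -/
open MeasureTheory ProbabilityTheory

/-- The quadratic form `‖x‖_M² = xᵀ M x`. -/
def quadForm {d : ℕ} (M : Matrix (Fin d) (Fin d) ℝ) (x : Fin d → ℝ) : ℝ :=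
  ∑ i, ∑ j, x i * M i j * x j

/-!
Write `m = E[Z]` and `m_E = E[Z | E]`. The mean minimises `c ↦ E ‖Z - c‖_M²` (the excess is
`‖m - c‖_M² ≥ 0`), so `E ‖Z - m‖_M² ≤ E ‖Z - m_E‖_M²`. Split the right side over `E` and `Eᶜ`.
The part over `E` is `P(E)` times the conditional expectation, hence at most it. By Jensen
`m_E` stays in the ball of radius `r` around `μ₀`, while `Z` lies outside it on `Eᶜ`; so there
`‖Z - m_E‖ ≤ 2 ‖Z - μ₀‖` and `‖Z - m_E‖_M² ≤ 4 ‖M‖_op ‖Z - μ₀‖²`.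
-/

open Matrix

section QuadForm

variable {d : ℕ}

lemma quadForm_eq_dotProduct_mulVec (M : Matrix (Fin d) (Fin d) ℝ) (x : Fin d → ℝ) :
    quadForm M x = x ⬝ᵥ M *ᵥ x := by
  simp only [quadForm, dotProduct, mulVec, Finset.mul_sum]
  exact Finset.sum_congr rfl fun i _ => Finset.sum_congr rfl fun j _ => by ring

lemma quadForm_nonneg {M : Matrix (Fin d) (Fin d) ℝ} (hM : M.PosSemidef) (x : Fin d → ℝ) :
    0 ≤ quadForm M x := by
  simpa [quadForm_eq_dotProduct_mulVec] using hM.dotProduct_mulVec_nonneg x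

lemma quadForm_add (M : Matrix (Fin d) (Fin d) ℝ) (x y : Fin d → ℝ) :
    quadForm M (x + y) = quadForm M x + x ⬝ᵥ (M *ᵥ y + y ᵥ* M) + quadForm M y := by
  simp only [quadForm_eq_dotProduct_mulVec, mulVec_add, dotProduct_add, add_dotProduct,
    dotProduct_mulVec y M x, dotProduct_comm (y ᵥ* M) x]
  ring

lemma quadForm_le_opNorm_mul_sum_sq (M : Matrix (Fin d) (Fin d) ℝ) (x : Fin d → ℝ) :
    quadForm M x ≤ opNorm M * ∑ i, x i ^ 2 := by
  set v : EuclideanSpace ℝ (Fin d) := WithLp.toLp 2 x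
  set A := (toEuclideanLin M).toContinuousLinearMap
  have hQ : quadForm M x = inner ℝ v (A v) := by
    simp [quadForm_eq_dotProduct_mulVec, PiLp.inner_apply, dotProduct, v, A, mul_comm]
  have hv : ∑ i, x i ^ 2 = ‖v‖ ^ 2 := by
    simp [EuclideanSpace.norm_sq_eq, v]
  calc quadForm M x = inner ℝ v (A v) := hQ
    _ ≤ ‖v‖ * ‖A v‖ := real_inner_le_norm _ _
    _ ≤ ‖v‖ * (opNorm M * ‖v‖) := by gcongr; exact A.le_opNorm v
    _ = opNorm M * ∑ i, x i ^ 2 := by rw [hv]; ring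

lemma sum_sq_sub_le_four_mul {ι : Type*} [Fintype ι] {x c a : ι → ℝ}
    (h : ∑ i, (c i - a i) ^ 2 ≤ ∑ i, (x i - a i) ^ 2) :
    ∑ i, (x i - c i) ^ 2 ≤ 4 * ∑ i, (x i - a i) ^ 2 :=
  calc ∑ i, (x i - c i) ^ 2 ≤ ∑ i, (2 * (x i - a i) ^ 2 + 2 * (c i - a i) ^ 2) := by
        gcongr with i; nlinarith [sq_nonneg (x i + c i - 2 * a i)]
    _ ≤ 4 * ∑ i, (x i - a i) ^ 2 := by
        rw [Finset.sum_add_distrib, ← Finset.mul_sum, ← Finset.mul_sum]; linarith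

lemma quadForm_sub_le_four_mul_opNorm (M : Matrix (Fin d) (Fin d) ℝ) {x c a : Fin d → ℝ}
    (h : ∑ i, (c i - a i) ^ 2 ≤ ∑ i, (x i - a i) ^ 2) :
    quadForm M (x - c) ≤ 4 * opNorm M * ∑ i, (x i - a i) ^ 2 := by
  refine (quadForm_le_opNorm_mul_sum_sq M _).trans ?_
  rw [mul_assoc, mul_left_comm]
  exact mul_le_mul_of_nonneg_left (sum_sq_sub_le_four_mul h) (norm_nonneg _)

end QuadForm

section Integrals

variable {Ω : Type*} [MeasurableSpace Ω] {ν : Measure Ω}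

lemma integrable_quadForm {d : ℕ} {Z : Ω → Fin d → ℝ} (hZ : MemLp Z 2 ν)
    (M : Matrix (Fin d) (Fin d) ℝ) :
    Integrable (fun ω => quadForm M (Z ω)) ν := by
  refine integrable_finsetSum _ fun i _ => integrable_finsetSum _ fun j _ => ?_
  simpa only [Pi.mul_apply, mul_right_comm _ (M i j)] using
    ((hZ.eval i).integrable_mul (hZ.eval j)).mul_const (M i j)

lemma integrable_sum_sq_sub [IsFiniteMeasure ν] {ι : Type*} [Fintype ι] {X : Ω → ι → ℝ}
    (hX : MemLp X 2 ν) (a : ι → ℝ) : Integrable (fun ω => ∑ i, (X ω i - a i) ^ 2) ν :=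
  integrable_finsetSum _ fun i _ => ((hX.eval i).sub (memLp_const _)).integrable_sq

lemma MeasureTheory.Integrable.dotProduct_const {ι : Type*} [Fintype ι] {Z : Ω → ι → ℝ}
    (hZ : Integrable Z ν) (v : ι → ℝ) : Integrable (fun ω => Z ω ⬝ᵥ v) ν :=
  integrable_finsetSum _ fun i _ => (hZ.eval i).mul_const _

lemma integral_sub_integral_dotProduct_eq_zero [IsProbabilityMeasure ν] {ι : Type*} [Fintype ι]
    {Z : Ω → ι → ℝ} (hZ : Integrable Z ν) (v : ι → ℝ) :
    ∫ ω, (Z ω - fun i => ∫ ω', Z ω' i ∂ν) ⬝ᵥ v ∂ν = 0 := by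
  have hZi : ∀ i, Integrable (fun ω => (Z ω i - ∫ ω', Z ω' i ∂ν) * v i) ν := fun i =>
    ((hZ.eval i).sub (integrable_const _)).mul_const _
  simp only [dotProduct, Pi.sub_apply]
  rw [integral_finsetSum _ fun i _ => hZi i]
  refine Finset.sum_eq_zero fun i _ => ?_
  rw [integral_mul_const, integral_sub (hZ.eval i) (integrable_const _)]
  simp

lemma integral_quadForm_sub [IsProbabilityMeasure ν] {d : ℕ} {Z : Ω → Fin d → ℝ}
    (hZ : MemLp Z 2 ν) (M : Matrix (Fin d) (Fin d) ℝ) (c : Fin d → ℝ) :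
    ∫ ω, quadForm M (Z ω - c) ∂ν
      = ∫ ω, quadForm M (Z ω - fun i => ∫ ω', Z ω' i ∂ν) ∂ν
        + quadForm M ((fun i => ∫ ω', Z ω' i ∂ν) - c) := by
  set m : Fin d → ℝ := fun i => ∫ ω', Z ω' i ∂ν
  have hZm : MemLp (fun ω => Z ω - m) 2 ν := hZ.sub (memLp_const m)
  have hsplit : ∀ ω, quadForm M (Z ω - c) = quadForm M (Z ω - m)
      + (Z ω - m) ⬝ᵥ (M *ᵥ (m - c) + (m - c) ᵥ* M) + quadForm M (m - c) := fun ω => by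
    rw [← quadForm_add, sub_add_sub_cancel]
  have hquad := integrable_quadForm hZm M
  have hcross := (hZm.integrable one_le_two).dotProduct_const (M *ᵥ (m - c) + (m - c) ᵥ* M)
  simp_rw [hsplit]
  rw [integral_add _ (integrable_const _), integral_add hquad hcross,
    integral_sub_integral_dotProduct_eq_zero (hZ.integrable one_le_two), integral_const]
  · simp
  · exact hquad.add hcross

lemma integral_quadForm_sub_integral_le [IsProbabilityMeasure ν] {d : ℕ}
    {Z : Ω → Fin d → ℝ} (hZ : MemLp Z 2 ν) {M : Matrix (Fin d) (Fin d) ℝ} (hM : M.PosSemidef)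
    (c : Fin d → ℝ) :
    ∫ ω, quadForm M (Z ω - fun i => ∫ ω', Z ω' i ∂ν) ∂ν ≤ ∫ ω, quadForm M (Z ω - c) ∂ν := by
  rw [integral_quadForm_sub hZ M c]
  exact le_add_of_nonneg_right (quadForm_nonneg hM _)

lemma sum_sq_integral_sub_le [IsProbabilityMeasure ν] {ι : Type*} [Fintype ι]
    {X : Ω → ι → ℝ} (hX : MemLp X 2 ν) (a : ι → ℝ) :
    ∑ i, (∫ ω, X ω i ∂ν - a i) ^ 2 ≤ ∫ ω, ∑ i, (X ω i - a i) ^ 2 ∂ν := by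
  have hXa : ∀ i, MemLp (fun ω => X ω i - a i) 2 ν := fun i => (hX.eval i).sub (memLp_const _)
  rw [integral_finsetSum _ fun i _ => (hXa i).integrable_sq]
  gcongr with i
  have hvar := variance_eq_sub (hXa i) ▸ variance_nonneg _ ν
  rw [integral_sub ((hX.eval i).integrable one_le_two) (integrable_const _)] at hvar
  simpa using hvar

lemma setIntegral_le_integral_cond [IsProbabilityMeasure ν] {s : Set Ω} {f : Ω → ℝ}
    (hf : ∀ ω, 0 ≤ f ω) :
    ∫ ω in s, f ω ∂ν ≤ ∫ ω, f ω ∂ν[|s] := by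
  rcases eq_or_ne (ν s) 0 with hs | hs
  · rw [Measure.restrict_eq_zero.mpr hs, integral_zero_measure]
    exact integral_nonneg hf
  rw [ProbabilityTheory.cond, integral_smul_measure, ENNReal.toReal_inv, smul_eq_mul]
  refine le_mul_of_one_le_left (integral_nonneg hf) ?_
  exact one_le_inv₀ (ENNReal.toReal_pos hs (measure_ne_top ν s)) |>.mpr
    (ENNReal.toReal_le_of_le_ofReal zero_le_one (by simpa using prob_le_one))

end Integrals

theorem cond_exp_trunc_quadform_general {d : ℕ} {Ω : Type*} [MeasurableSpace Ω] (μ : Measure Ω)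
    [IsProbabilityMeasure μ]
    (Z : Ω → Fin d → ℝ) (hZmeas : Measurable Z) (hZ : MemLp Z 2 μ)
    (M : Matrix (Fin d) (Fin d) ℝ) (hM : M.PosSemidef)
    (μ0 : Fin d → ℝ) (r : ℝ)
    (E : Set Ω) (hEdef : E = {ω | ∑ i, (Z ω i - μ0 i) ^ 2 ≤ r ^ 2}) (hE : μ E ≠ 0) :
    (∫ ω, quadForm M (fun i => Z ω i - ∫ ω', Z ω' i ∂(μ[|E])) ∂(μ[|E]))
      ≥ (∫ ω, quadForm M (fun i => Z ω i - ∫ ω', Z ω' i ∂μ) ∂μ)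
        - 4 * opNorm M * ∫ ω in Eᶜ, ∑ i, (Z ω i - μ0 i) ^ 2 ∂μ := by
  have hEmeas : MeasurableSet E := hEdef ▸ measurableSet_le (by fun_prop) measurable_const
  have hmem : ∀ ω, ω ∈ E ↔ ∑ i, (Z ω i - μ0 i) ^ 2 ≤ r ^ 2 := fun ω => by rw [hEdef]; rfl
  have : IsProbabilityMeasure μ[|E] := cond_isProbabilityMeasure hE
  have hZE : MemLp Z 2 μ[|E] := (hZ.restrict E).smul_measure (ENNReal.inv_ne_top.mpr hE)
  set mE : Fin d → ℝ := fun i => ∫ ω, Z ω i ∂μ[|E]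
  have hQ := integrable_quadForm (hZ.sub (memLp_const mE)) M
  have hmE : ∑ i, (mE i - μ0 i) ^ 2 ≤ r ^ 2 := by
    refine (sum_sq_integral_sub_le hZE μ0).trans ?_
    simpa using integral_mono_ae (integrable_sum_sq_sub hZE μ0) (integrable_const (r ^ 2))
      ((ae_cond_mem hEmeas).mono fun ω => (hmem ω).mp)
  have hout : ∀ ω ∈ Eᶜ, quadForm M (Z ω - mE) ≤ 4 * opNorm M * ∑ i, (Z ω i - μ0 i) ^ 2 :=
    fun ω hω => quadForm_sub_le_four_mul_opNorm M <|
      hmE.trans (not_le.mp ((hmem ω).not.mp hω)).le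
  rw [ge_iff_le, sub_le_iff_le_add]
  calc ∫ ω, quadForm M (Z ω - fun i => ∫ ω', Z ω' i ∂μ) ∂μ
      ≤ ∫ ω, quadForm M (Z ω - mE) ∂μ := integral_quadForm_sub_integral_le hZ hM mE
    _ = ∫ ω in E, quadForm M (Z ω - mE) ∂μ + ∫ ω in Eᶜ, quadForm M (Z ω - mE) ∂μ :=
        (integral_add_compl hEmeas hQ).symm
    _ ≤ ∫ ω, quadForm M (Z ω - mE) ∂μ[|E]
          + 4 * opNorm M * ∫ ω in Eᶜ, ∑ i, (Z ω i - μ0 i) ^ 2 ∂μ := by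
        refine add_le_add (setIntegral_le_integral_cond fun ω => quadForm_nonneg hM _) ?_
        rw [← integral_const_mul]
        exact setIntegral_mono_on hQ.integrableOn
          ((integrable_sum_sq_sub hZ μ0).const_mul _).integrableOn hEmeas.compl hout

/-- For a square-integrable random vector `Z`, `μ₀ ∈ ℝ^d`, `r ≥ 0`,
`E := {‖Z − μ₀‖₂ ≤ r}` with `P(E) > 0`, and `M ⪰ 0`:
`E[‖Z − E[Z|E]‖_M² | E] ≥ E[‖Z − E[Z]‖_M²] − 4 ‖M‖_op E[1_{Eᶜ} ‖Z − μ₀‖₂²]`. -/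
theorem cond_exp_trunc_quadform {d : ℕ} {Ω : Type*} [MeasurableSpace Ω] (μ : Measure Ω)
    [IsProbabilityMeasure μ]
    (Z : Ω → Fin d → ℝ) (hZmeas : Measurable Z) (hZ : MemLp Z 2 μ)
    (M : Matrix (Fin d) (Fin d) ℝ) (hM : M.PosSemidef)
    (μ0 : Fin d → ℝ) (r : ℝ) (hr : 0 ≤ r)
    (E : Set Ω) (hEdef : E = {ω | ∑ i, (Z ω i - μ0 i) ^ 2 ≤ r ^ 2}) (hE : μ E ≠ 0) :
    (∫ ω, quadForm M (fun i => Z ω i - ∫ ω', Z ω' i ∂(μ[|E])) ∂(μ[|E]))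
      ≥ (∫ ω, quadForm M (fun i => Z ω i - ∫ ω', Z ω' i ∂μ) ∂μ)
        - 4 * opNorm M * ∫ ω in Eᶜ, ∑ i, (Z ω i - μ0 i) ^ 2 ∂μ :=
  cond_exp_trunc_quadform_general μ Z hZmeas hZ M hM μ0 r E hEdef hE
end

section
/- Consider the deterministic linear system x_{t+1} = A x_t + B u_t with x_0 = 0, where there exist τ ≥ 1 and ρ ∈ (0,1) with ‖Aᵏ‖_op ≤ τ ρᵏ for all k. If Σ_{t=0}^{T−1} u_tᵀ u_t ≤ T γ², then Σ_{t=1}^{T} ‖x_t‖₂² ≤ 4 τ² ‖B‖_op² γ² T / (1 − ρ)². -/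
open Finset Matrix WithLp

lemma norm_toLp_mulVec_le {𝕜 : Type*} [RCLike 𝕜] {m n : Type*} [Fintype m] [Fintype n]
    [DecidableEq n] (M : Matrix m n 𝕜) (v : n → 𝕜) :
    ‖toLp 2 (M *ᵥ v)‖ ≤ opNorm M * ‖toLp 2 v‖ :=
  (toEuclideanLin M).toContinuousLinearMap.le_opNorm (toLp 2 v)

theorem eq_sum_pow_mulVec_of_recurrence {R n : Type*} [Semiring R] [Fintype n] [DecidableEq n]
    {A : Matrix n n R} {f x : ℕ → n → R} (hx0 : x 0 = 0)
    (hx : ∀ t, x (t + 1) = A *ᵥ x t + f t) (t : ℕ) :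
    x (t + 1) = ∑ s ∈ range (t + 1), (A ^ (t - s)) *ᵥ f s := by
  induction t with
  | zero => simp [hx, hx0]
  | succ t ih =>
    rw [hx, ih, sum_range_succ _ (t + 1), mulVec_sum]
    congr 1
    · refine sum_congr rfl fun s hs => ?_
      rw [mulVec_mulVec, ← pow_succ', Nat.sub_add_comm (mem_range_succ_iff.mp hs)]
    · simp

theorem sum_sq_causal_conv_le {R : Type*} [CommRing R] [LinearOrder R] [IsStrictOrderedRing R]
    {k a : ℕ → R} {K : R} (hk : ∀ j, 0 ≤ k j) (hK : ∀ n, ∑ j ∈ range n, k j ≤ K) (T : ℕ) :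
    ∑ t ∈ range T, (∑ s ∈ range (t + 1), k (t - s) * a s) ^ 2 ≤ K ^ 2 * ∑ s ∈ range T, a s ^ 2 := by
  have hK0 : 0 ≤ K := by simpa using hK 0
  have cauchy_schwarz : ∀ t, (∑ s ∈ range (t + 1), k (t - s) * a s) ^ 2
      ≤ K * ∑ s ∈ range (t + 1), k (t - s) * a s ^ 2 := by
    intro t
    calc (∑ s ∈ range (t + 1), k (t - s) * a s) ^ 2
        ≤ (∑ s ∈ range (t + 1), k (t - s)) * ∑ s ∈ range (t + 1), k (t - s) * a s ^ 2 :=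
          sum_sq_le_sum_mul_sum_of_sq_le_mul _ (fun s _ => hk _)
            (fun s _ => mul_nonneg (hk _) (sq_nonneg _)) fun s _ => le_of_eq (by ring)
      _ ≤ K * ∑ s ∈ range (t + 1), k (t - s) * a s ^ 2 := by
          gcongr
          · exact sum_nonneg fun s _ => mul_nonneg (hk _) (sq_nonneg _)
          · simpa [← sum_range_reflect k (t + 1)] using hK (t + 1)
  calc ∑ t ∈ range T, (∑ s ∈ range (t + 1), k (t - s) * a s) ^ 2
      ≤ K * ∑ t ∈ range T, ∑ s ∈ range (t + 1), k (t - s) * a s ^ 2 := by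
        rw [mul_sum]; exact sum_le_sum fun t _ => cauchy_schwarz t
    _ = K * ∑ s ∈ range T, (∑ j ∈ range (T - s), k j) * a s ^ 2 := by
        rw [sum_range_diag_flip T fun s j => k j * a s ^ 2]
        simp only [sum_mul]
    _ ≤ K * ∑ s ∈ range T, K * a s ^ 2 := by
        gcongr with s; exact hK _
    _ = K ^ 2 * ∑ s ∈ range T, a s ^ 2 := by rw [← mul_sum]; ring

lemma norm_state_le_conv {𝕜 : Type*} [RCLike 𝕜] {m n : Type*} [Fintype m] [Fintype n]
    [DecidableEq m] [DecidableEq n] {A : Matrix m m 𝕜} {B : Matrix m n 𝕜}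
    {u : ℕ → n → 𝕜} {x : ℕ → m → 𝕜} {τ ρ : ℝ}
    (hA : ∀ k : ℕ, opNorm (A ^ k) ≤ τ * ρ ^ k) (hx0 : x 0 = 0)
    (hxrec : ∀ t, x (t + 1) = A *ᵥ x t + B *ᵥ u t) (t : ℕ) :
    ‖toLp 2 (x (t + 1))‖
      ≤ ∑ s ∈ range (t + 1), τ * opNorm B * ρ ^ (t - s) * ‖toLp 2 (u s)‖ := by
  rw [eq_sum_pow_mulVec_of_recurrence hx0 hxrec, toLp_sum]
  refine (norm_sum_le _ _).trans (sum_le_sum fun s _ => ?_)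
  calc ‖toLp 2 (A ^ (t - s) *ᵥ B *ᵥ u s)‖
      ≤ opNorm (A ^ (t - s)) * ‖toLp 2 (B *ᵥ u s)‖ := norm_toLp_mulVec_le _ _
    _ ≤ τ * ρ ^ (t - s) * (opNorm B * ‖toLp 2 (u s)‖) :=
        mul_le_mul (hA _) (norm_toLp_mulVec_le _ _) (norm_nonneg _) ((norm_nonneg _).trans (hA _))
    _ = τ * opNorm B * ρ ^ (t - s) * ‖toLp 2 (u s)‖ := by ring

/-- for the deterministic linear system `x_{t+1} = A x_t + B u_t`, `x₀ = 0`,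
with `‖Aᵏ‖_op ≤ τ ρᵏ` (τ ≥ 1, ρ ∈ (0,1)) and input energy `Σ_{t<T} ‖u_t‖² ≤ T γ²`, one has
`Σ_{t=1}^T ‖x_t‖₂² ≤ 4 τ² ‖B‖_op² γ² T / (1 − ρ)²`. -/
theorem input_energy_state_bound {d p : ℕ}
    (A : Matrix (Fin d) (Fin d) ℝ) (B : Matrix (Fin d) (Fin p) ℝ)
    (u : ℕ → Fin p → ℝ) (x : ℕ → Fin d → ℝ)
    (τ ρ γ : ℝ) (hτ : 1 ≤ τ) (hρ0 : 0 < ρ) (hρ1 : ρ < 1)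
    (hA : ∀ k : ℕ, opNorm (A ^ k) ≤ τ * ρ ^ k)
    (hx0 : x 0 = 0)
    (hxrec : ∀ t, x (t + 1) = A.mulVec (x t) + B.mulVec (u t))
    (T : ℕ)
    (hu : ∑ t ∈ Finset.range T, ∑ i, (u t i) ^ 2 ≤ (T : ℝ) * γ ^ 2) :
    ∑ t ∈ Finset.Icc 1 T, ∑ i, (x t i) ^ 2
      ≤ 4 * τ ^ 2 * (opNorm B) ^ 2 * γ ^ 2 * T / (1 - ρ) ^ 2 := by
  have hB : 0 ≤ opNorm B := norm_nonneg _
  have hkernel : ∀ n, ∑ j ∈ range n, τ * opNorm B * ρ ^ j ≤ τ * opNorm B / (1 - ρ) := by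
    intro n
    rw [← mul_sum, div_eq_mul_inv]
    refine mul_le_mul_of_nonneg_left ?_ (by positivity)
    simpa using geom_sum_Ico_le_of_lt_one hρ0.le hρ1 (m := 0) (n := n)
  have henergy : ∑ s ∈ range T, ‖toLp 2 (u s)‖ ^ 2 ≤ T * γ ^ 2 := by
    simpa only [EuclideanSpace.real_norm_sq_eq] using hu
  calc ∑ t ∈ Icc 1 T, ∑ i, (x t i) ^ 2
      = ∑ t ∈ range T, ‖toLp 2 (x (t + 1))‖ ^ 2 := by
        rw [← Ico_add_one_right_eq_Icc, sum_Ico_eq_sum_range, Nat.add_sub_cancel]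
        simp only [EuclideanSpace.real_norm_sq_eq, add_comm 1]
    _ ≤ ∑ t ∈ range T, (∑ s ∈ range (t + 1),
          τ * opNorm B * ρ ^ (t - s) * ‖toLp 2 (u s)‖) ^ 2 := by
        gcongr with t; exact norm_state_le_conv hA hx0 hxrec t
    _ ≤ (τ * opNorm B / (1 - ρ)) ^ 2 * (T * γ ^ 2) := by
        refine (sum_sq_causal_conv_le (fun j => by positivity) hkernel T).trans ?_
        gcongr
    _ = τ ^ 2 * (opNorm B) ^ 2 * γ ^ 2 * T / (1 - ρ) ^ 2 := by rw [div_pow]; ring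
    _ ≤ 4 * τ ^ 2 * (opNorm B) ^ 2 * γ ^ 2 * T / (1 - ρ) ^ 2 := by
        gcongr ?_ * _ * _ * _ / _
        linarith [sq_nonneg τ]
end

section
/- Assume ‖(A,B) − (Â,B̂)‖_op ≤ ε and ε ≤ (1−ρ)/(2 τ(A,ρ)) where ‖Aᵏ‖_op ≤ τ(A,ρ) ρᵏ for all k. Then ‖Σ_{k=0}^{t}(σ_w² Aᵏ(Aᵏ)ᵀ + σ_u² Aᵏ B Bᵀ (Aᵏ)ᵀ) − Σ_{k=0}^{t}(σ_w² Âᵏ(Âᵏ)ᵀ + σ_u² Âᵏ B̂ B̂ᵀ (Âᵏ)ᵀ)‖_op ≤ (8(σ_w² + σ_u² ‖B‖_op²) τ(A,ρ)³/(1−ρ²)² + 4 σ_u² ‖B‖_op τ(A,ρ)²/(1−ρ²)) ε + 2 σ_u² τ(A,ρ)² ε²/(1−ρ²), uniformly in t. -/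
/-!
Put `s = ρ + τ ε`, so that `s ≤ (1 + ρ) / 2` by the smallness of `ε`. The telescoping identity
`Xᵏ - Yᵏ = ∑ Yʲ (X - Y) Xᵏ⁻¹⁻ʲ` and strong induction on `k` give `‖Âᵏ‖ ≤ τ sᵏ`; the same
identity then gives `‖Aᵏ⁺¹ - Âᵏ⁺¹‖ ≤ (k + 1) τ² ε sᵏ`. Each Gramian summand is the congruence
`Aᵏ Σ (Aᵏ)ᵀ` of the noise covariance `Σ = σ_w² I + σ_u² B Bᵀ`, so the `k`-th summands of the two
Gramians differ by at most `2 τ sᵏ ‖Σ‖ ‖Aᵏ - Âᵏ‖ + τ² s²ᵏ ‖Σ - Σ̂‖`, where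
`‖Σ - Σ̂‖ ≤ σ_u² ε (2 ‖B‖ + ε)`. Summing against `∑ (k + 1) s²ᵏ ≤ (1 - s²)⁻²` and
`∑ s²ᵏ ≤ (1 - s²)⁻¹`, and using `1 - s² ≥ (1 - ρ²) / 2`, gives the bound.
-/

open Matrix

open Finset
open scoped Matrix.Norms.L2Operator

theorem opNorm_eq_l2_opNorm {𝕜 : Type*} [RCLike 𝕜] {m n : Type*} [Fintype m] [Fintype n]
    [DecidableEq n] (M : Matrix m n 𝕜) : opNorm M = ‖M‖ := rfl

theorem sum_range_pow_le {q : ℝ} (h0 : 0 ≤ q) (h1 : q < 1) (n : ℕ) :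
    ∑ k ∈ range n, q ^ k ≤ 1 / (1 - q) := by
  rw [range_eq_Ico]
  simpa using geom_sum_Ico_le_of_lt_one (m := 0) (n := n) h0 h1

theorem sum_range_succ_mul_pow_le {q : ℝ} (h0 : 0 ≤ q) (h1 : q < 1) (n : ℕ) :
    ∑ k ∈ range n, (k + 1) * q ^ k ≤ 1 / (1 - q) ^ 2 := by
  have h := hasSum_choose_mul_geometric_of_norm_lt_one 1 (r := q)
    (by rwa [Real.norm_of_nonneg h0])
  simp only [Nat.choose_one_right, Nat.cast_add, Nat.cast_one] at h
  exact sum_le_hasSum (range n) (fun k _ => by positivity) h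

theorem pow_sub_pow_eq_sum_mul {R : Type*} [Ring R] (X Y : R) (k : ℕ) :
    X ^ k - Y ^ k = ∑ j ∈ range k, Y ^ j * (X - Y) * X ^ (k - 1 - j) := by
  induction k with
  | zero => simp
  | succ k ih =>
    have hstep : X ^ (k + 1) - Y ^ (k + 1) = (X ^ k - Y ^ k) * X + Y ^ k * (X - Y) := by
      rw [pow_succ, pow_succ]; noncomm_ring
    rw [hstep, ih, sum_mul, sum_range_succ, Nat.add_sub_cancel, Nat.sub_self, pow_zero, mul_one]
    congr 1
    refine sum_congr rfl fun j hj => ?_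
    rw [mul_assoc, ← pow_succ]
    congr 2
    have := mem_range.1 hj
    omega

section NormedRing

variable {R : Type*} [NormedRing R]

theorem norm_pow_sub_pow_le_sum (X Y : R) (k : ℕ) :
    ‖X ^ k - Y ^ k‖ ≤ ∑ j ∈ range k, ‖Y ^ j‖ * ‖X - Y‖ * ‖X ^ (k - 1 - j)‖ := by
  rw [pow_sub_pow_eq_sum_mul]
  exact (norm_sum_le _ _).trans (sum_le_sum fun _ _ => norm_mul₃_le)

theorem norm_pow_le_of_norm_sub_le {X Y : R} {τ ρ ε : ℝ} (hX : ∀ k, ‖X ^ k‖ ≤ τ * ρ ^ k)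
    (hXY : ‖X - Y‖ ≤ ε) (k : ℕ) : ‖Y ^ k‖ ≤ τ * (ρ + τ * ε) ^ k := by
  induction k using Nat.strong_induction_on with
  | _ k ih =>
  set s := ρ + τ * ε
  have hdiff : ‖X ^ k - Y ^ k‖ ≤ τ * (s ^ k - ρ ^ k) := calc
    ‖X ^ k - Y ^ k‖ ≤ ∑ j ∈ range k, τ * s ^ j * ε * (τ * ρ ^ (k - 1 - j)) := by
        refine (norm_pow_sub_pow_le_sum X Y k).trans (sum_le_sum fun j hj => ?_)
        have hYj := ih j (mem_range.1 hj)
        have hτs : 0 ≤ τ * s ^ j := (norm_nonneg _).trans hYj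
        have hε : 0 ≤ ε := (norm_nonneg _).trans hXY
        gcongr
        exact hX _
    _ = τ * ((∑ j ∈ range k, s ^ j * ρ ^ (k - 1 - j)) * (s - ρ)) := by
        rw [sum_mul, mul_sum]
        refine sum_congr rfl fun j _ => ?_
        simp only [s]; ring
    _ = τ * (s ^ k - ρ ^ k) := by rw [geom_sum₂_mul]
  calc ‖Y ^ k‖ ≤ ‖X ^ k‖ + ‖X ^ k - Y ^ k‖ := norm_le_norm_add_norm_sub _ _
    _ ≤ τ * ρ ^ k + τ * (s ^ k - ρ ^ k) := add_le_add (hX k) hdiff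
    _ = τ * s ^ k := by ring

theorem norm_pow_succ_sub_pow_succ_le {X Y : R} {τ s ε : ℝ} (hX : ∀ k, ‖X ^ k‖ ≤ τ * s ^ k)
    (hY : ∀ k, ‖Y ^ k‖ ≤ τ * s ^ k) (hXY : ‖X - Y‖ ≤ ε) (k : ℕ) :
    ‖X ^ (k + 1) - Y ^ (k + 1)‖ ≤ (k + 1) * (τ ^ 2 * ε * s ^ k) := calc
  ‖X ^ (k + 1) - Y ^ (k + 1)‖ ≤ ∑ j ∈ range (k + 1), τ * s ^ j * ε * (τ * s ^ (k - j)) := by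
      refine (norm_pow_sub_pow_le_sum X Y _).trans (sum_le_sum fun j _ => ?_)
      have hYj := hY j
      have hτs : 0 ≤ τ * s ^ j := (norm_nonneg _).trans hYj
      have hε : 0 ≤ ε := (norm_nonneg _).trans hXY
      rw [Nat.add_sub_cancel]
      gcongr
      exact hX _
  _ = ∑ j ∈ range (k + 1), τ ^ 2 * ε * s ^ k := by
      refine sum_congr rfl fun j hj => ?_
      rw [← Nat.add_sub_cancel' (Nat.lt_succ_iff.1 (mem_range.1 hj)), Nat.add_sub_cancel_left,
        pow_add]
      ring
  _ = (k + 1) * (τ ^ 2 * ε * s ^ k) := by simp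

theorem sum_pow_mul_norm_pow_sub_pow_le {X Y : R} {τ s ε : ℝ} (hX : ∀ k, ‖X ^ k‖ ≤ τ * s ^ k)
    (hY : ∀ k, ‖Y ^ k‖ ≤ τ * s ^ k) (hXY : ‖X - Y‖ ≤ ε) (hs0 : 0 ≤ s) (hs1 : s < 1) (n : ℕ) :
    ∑ k ∈ range (n + 1), s ^ k * ‖X ^ k - Y ^ k‖ ≤ τ ^ 2 * ε / (1 - s ^ 2) ^ 2 := by
  have hε : 0 ≤ ε := (norm_nonneg _).trans hXY
  rw [sum_range_succ', pow_zero, pow_zero, pow_zero, sub_self, norm_zero, mul_zero, add_zero]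
  calc ∑ k ∈ range n, s ^ (k + 1) * ‖X ^ (k + 1) - Y ^ (k + 1)‖
      ≤ ∑ k ∈ range n, τ ^ 2 * ε * ((k + 1) * (s ^ 2) ^ k) := by
        refine sum_le_sum fun k _ => ?_
        calc s ^ (k + 1) * ‖X ^ (k + 1) - Y ^ (k + 1)‖
            ≤ s ^ k * ((k + 1) * (τ ^ 2 * ε * s ^ k)) :=
              mul_le_mul (pow_le_pow_of_le_one hs0 hs1.le k.le_succ)
                (norm_pow_succ_sub_pow_succ_le hX hY hXY k) (norm_nonneg _) (pow_nonneg hs0 k)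
          _ = τ ^ 2 * ε * ((k + 1) * (s ^ 2) ^ k) := by ring
    _ = τ ^ 2 * ε * ∑ k ∈ range n, (k + 1) * (s ^ 2) ^ k := by rw [mul_sum]
    _ ≤ τ ^ 2 * ε * (1 / (1 - s ^ 2) ^ 2) := by
        gcongr
        exact sum_range_succ_mul_pow_le (sq_nonneg s) (by nlinarith) n
    _ = τ ^ 2 * ε / (1 - s ^ 2) ^ 2 := by ring

end NormedRing

namespace Matrix

theorem fromCols_sub_fromCols {R : Type*} [Sub R] {m n p : Type*}
    (A A' : Matrix m n R) (B B' : Matrix m p R) :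
    fromCols A B - fromCols A' B' = fromCols (A - A') (B - B') := by
  ext i (j | j) <;> rfl

variable {𝕜 : Type*} [RCLike 𝕜] {l m n p : Type*} [Fintype l] [Fintype m] [Fintype n] [Fintype p]
  [DecidableEq l] [DecidableEq m] [DecidableEq n] [DecidableEq p]

omit [DecidableEq m] in
theorem l2_opNorm_mul_mul_le (X : Matrix m n 𝕜) (P : Matrix n p 𝕜) (Z : Matrix p l 𝕜) :
    ‖X * P * Z‖ ≤ ‖X‖ * ‖P‖ * ‖Z‖ :=
  (l2_opNorm_mul _ _).trans (mul_le_mul_of_nonneg_right (l2_opNorm_mul _ _) (norm_nonneg _))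

theorem l2_opNorm_transpose (M : Matrix m n ℝ) : ‖Mᵀ‖ = ‖M‖ := by
  simpa using l2_opNorm_conjTranspose M

theorem l2_opNorm_one_le : ‖(1 : Matrix n n 𝕜)‖ ≤ 1 := by
  have h := l2_opNorm_conjTranspose_mul_self (1 : Matrix n n 𝕜)
  rw [conjTranspose_one, one_mul] at h
  nlinarith [norm_nonneg (1 : Matrix n n 𝕜)]

omit [DecidableEq m] in
theorem l2_opNorm_mul_le_of_conjTranspose_mul_self_eq_one (M : Matrix m l 𝕜)
    {E : Matrix l n 𝕜} (hE : Eᴴ * E = 1) : ‖M * E‖ ≤ ‖M‖ := by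
  have h := l2_opNorm_conjTranspose_mul_self E
  rw [hE] at h
  have hE1 : ‖E‖ ≤ 1 := by nlinarith [norm_nonneg E, l2_opNorm_one_le (𝕜 := 𝕜) (n := n)]
  exact (l2_opNorm_mul _ _).trans (mul_le_of_le_one_right (norm_nonneg _) hE1)

omit [DecidableEq m] in
theorem l2_opNorm_le_l2_opNorm_fromCols_left (X : Matrix m n 𝕜) (Y : Matrix m p 𝕜) :
    ‖X‖ ≤ ‖fromCols X Y‖ := by
  have h := l2_opNorm_mul_le_of_conjTranspose_mul_self_eq_one (fromCols X Y)
    (E := fromRows (1 : Matrix n n 𝕜) 0) (by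
      rw [conjTranspose_fromRows_eq_fromCols_conjTranspose, fromCols_mul_fromRows]; simp)
  rwa [fromCols_mul_fromRows, Matrix.mul_one, Matrix.mul_zero, add_zero] at h

omit [DecidableEq m] in
theorem l2_opNorm_le_l2_opNorm_fromCols_right (X : Matrix m n 𝕜) (Y : Matrix m p 𝕜) :
    ‖Y‖ ≤ ‖fromCols X Y‖ := by
  have h := l2_opNorm_mul_le_of_conjTranspose_mul_self_eq_one (fromCols X Y)
    (E := fromRows (0 : Matrix n p 𝕜) 1) (by
      rw [conjTranspose_fromRows_eq_fromCols_conjTranspose, fromCols_mul_fromRows]; simp)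
  rwa [fromCols_mul_fromRows, Matrix.mul_one, Matrix.mul_zero, zero_add] at h

theorem l2_opNorm_mul_conjTranspose_sub_le (M N : Matrix m n 𝕜) :
    ‖M * Mᴴ - N * Nᴴ‖ ≤ ‖M - N‖ * (‖M‖ + ‖N‖) := by
  have hsplit : M * Mᴴ - N * Nᴴ = (M - N) * Mᴴ + N * (M - N)ᴴ := by
    simp only [Matrix.sub_mul, Matrix.mul_sub, conjTranspose_sub]; abel
  calc ‖M * Mᴴ - N * Nᴴ‖ ≤ ‖M - N‖ * ‖Mᴴ‖ + ‖N‖ * ‖(M - N)ᴴ‖ := by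
        rw [hsplit]
        exact (norm_add_le _ _).trans (add_le_add (l2_opNorm_mul _ _) (l2_opNorm_mul _ _))
    _ = ‖M - N‖ * (‖M‖ + ‖N‖) := by
        rw [l2_opNorm_conjTranspose, l2_opNorm_conjTranspose]; ring

theorem l2_opNorm_mul_mul_conjTranspose_sub_le (X Y : Matrix m n 𝕜) (P Q : Matrix n n 𝕜) :
    ‖X * P * Xᴴ - Y * Q * Yᴴ‖ ≤ ‖X - Y‖ * ‖P‖ * (‖X‖ + ‖Y‖) + ‖Y‖ * ‖P - Q‖ * ‖Y‖ := by
  have hsplit : X * P * Xᴴ - Y * Q * Yᴴ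
      = (X - Y) * P * Xᴴ + Y * P * (X - Y)ᴴ + Y * (P - Q) * Yᴴ := by
    simp only [Matrix.sub_mul, Matrix.mul_sub, conjTranspose_sub]; abel
  calc ‖X * P * Xᴴ - Y * Q * Yᴴ‖
      ≤ ‖X - Y‖ * ‖P‖ * ‖Xᴴ‖ + ‖Y‖ * ‖P‖ * ‖(X - Y)ᴴ‖ + ‖Y‖ * ‖P - Q‖ * ‖Yᴴ‖ := by
        rw [hsplit]
        refine (norm_add₃_le).trans (add_le_add (add_le_add ?_ ?_) ?_) <;>
          exact l2_opNorm_mul_mul_le _ _ _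
    _ = ‖X - Y‖ * ‖P‖ * (‖X‖ + ‖Y‖) + ‖Y‖ * ‖P - Q‖ * ‖Y‖ := by
        simp only [l2_opNorm_conjTranspose]; ring

theorem l2_opNorm_sum_pow_mul_mul_conjTranspose_sub_le {A Â : Matrix n n 𝕜} (P Q : Matrix n n 𝕜)
    {τ s ε : ℝ} (hA : ∀ k, ‖A ^ k‖ ≤ τ * s ^ k) (hÂ : ∀ k, ‖Â ^ k‖ ≤ τ * s ^ k)
    (hAÂ : ‖A - Â‖ ≤ ε) (hs0 : 0 ≤ s) (hs1 : s < 1) (t : ℕ) :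
    ‖∑ k ∈ range (t + 1), (A ^ k * P * (A ^ k)ᴴ - Â ^ k * Q * (Â ^ k)ᴴ)‖
      ≤ 2 * τ ^ 3 * ε * ‖P‖ / (1 - s ^ 2) ^ 2 + τ ^ 2 * ‖P - Q‖ / (1 - s ^ 2) := by
  have hτ : 0 ≤ τ := by simpa using (norm_nonneg _).trans (hA 0)
  have hε : 0 ≤ ε := (norm_nonneg _).trans hAÂ
  have hq1 : s ^ 2 < 1 := by nlinarith
  calc ‖∑ k ∈ range (t + 1), (A ^ k * P * (A ^ k)ᴴ - Â ^ k * Q * (Â ^ k)ᴴ)‖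
      ≤ ∑ k ∈ range (t + 1), (2 * τ * ‖P‖ * (s ^ k * ‖A ^ k - Â ^ k‖)
          + τ ^ 2 * ‖P - Q‖ * (s ^ 2) ^ k) := by
        refine (norm_sum_le _ _).trans (sum_le_sum fun k _ => ?_)
        refine (l2_opNorm_mul_mul_conjTranspose_sub_le _ _ _ _).trans ?_
        have hAk := hA k
        have hÂk := hÂ k
        calc _ ≤ ‖A ^ k - Â ^ k‖ * ‖P‖ * (τ * s ^ k + τ * s ^ k)
              + τ * s ^ k * ‖P - Q‖ * (τ * s ^ k) := by gcongr
          _ = _ := by ring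
    _ = 2 * τ * ‖P‖ * ∑ k ∈ range (t + 1), s ^ k * ‖A ^ k - Â ^ k‖
          + τ ^ 2 * ‖P - Q‖ * ∑ k ∈ range (t + 1), (s ^ 2) ^ k := by
        rw [sum_add_distrib, mul_sum, mul_sum]
    _ ≤ 2 * τ * ‖P‖ * (τ ^ 2 * ε / (1 - s ^ 2) ^ 2) + τ ^ 2 * ‖P - Q‖ * (1 / (1 - s ^ 2)) := by
        gcongr
        · exact sum_pow_mul_norm_pow_sub_pow_le hA hÂ hAÂ hs0 hs1 t
        · exact sum_range_pow_le (sq_nonneg s) hq1 _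
    _ = 2 * τ ^ 3 * ε * ‖P‖ / (1 - s ^ 2) ^ 2 + τ ^ 2 * ‖P - Q‖ / (1 - s ^ 2) := by ring

end Matrix

section Gramian

variable {m n p : Type*} [Fintype n] [Fintype p] [DecidableEq n] [DecidableEq p]

/-- The covariance `σ_w² I + σ_u² B Bᵀ` of the noise `w + B u` driving the system. -/
def noiseCovariance (σw σu : ℝ) (B : Matrix n p ℝ) : Matrix n n ℝ :=
  σw ^ 2 • 1 + σu ^ 2 • (B * Bᵀ)

omit [DecidableEq p] in
theorem gramian_summand_eq (σw σu : ℝ) (X : Matrix m n ℝ) (B : Matrix n p ℝ) :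
    σw ^ 2 • (X * Xᵀ) + σu ^ 2 • (X * B * Bᵀ * Xᵀ) = X * noiseCovariance σw σu B * Xᵀ := by
  simp only [noiseCovariance, Matrix.mul_add, Matrix.add_mul, Matrix.mul_smul, Matrix.smul_mul,
    Matrix.mul_one, Matrix.mul_assoc]

theorem l2_opNorm_noiseCovariance_le (σw σu : ℝ) (B : Matrix n p ℝ) :
    ‖noiseCovariance σw σu B‖ ≤ σw ^ 2 + σu ^ 2 * ‖B‖ ^ 2 := by
  have hBBt : ‖B * Bᵀ‖ ≤ ‖B‖ ^ 2 := by
    simpa [sq, l2_opNorm_transpose] using l2_opNorm_mul B Bᵀ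
  calc ‖noiseCovariance σw σu B‖ ≤ σw ^ 2 * ‖(1 : Matrix n n ℝ)‖ + σu ^ 2 * ‖B * Bᵀ‖ := by
        refine (norm_add_le _ _).trans_eq ?_
        rw [norm_smul, norm_smul, Real.norm_of_nonneg (sq_nonneg _),
          Real.norm_of_nonneg (sq_nonneg _)]
    _ ≤ σw ^ 2 + σu ^ 2 * ‖B‖ ^ 2 := by
        gcongr
        exact mul_le_of_le_one_right (sq_nonneg _) l2_opNorm_one_le

theorem l2_opNorm_noiseCovariance_sub_le (σw σu : ℝ) (B B' : Matrix n p ℝ) :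
    ‖noiseCovariance σw σu B - noiseCovariance σw σu B'‖
      ≤ σu ^ 2 * (‖B - B'‖ * (‖B‖ + ‖B'‖)) := by
  have hdiff : noiseCovariance σw σu B - noiseCovariance σw σu B'
      = σu ^ 2 • (B * Bᵀ - B' * B'ᵀ) := by
    simp only [noiseCovariance, smul_sub]; abel
  rw [hdiff, norm_smul, Real.norm_of_nonneg (sq_nonneg _)]
  gcongr
  simpa using l2_opNorm_mul_conjTranspose_sub_le B B'

end Gramian

theorem gramian_perturbation_general {d p : ℕ}
    (A Ahat : Matrix (Fin d) (Fin d) ℝ) (B Bhat : Matrix (Fin d) (Fin p) ℝ)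
    (σw σu τ ρ ε : ℝ)
    (hρ0 : 0 < ρ) (hρ1 : ρ < 1) (hτ : 0 < τ)
    (hA : ∀ k : ℕ, opNorm (A ^ k) ≤ τ * ρ ^ k)
    (hpert : opNorm (Matrix.fromCols A B - Matrix.fromCols Ahat Bhat) ≤ ε)
    (hεsmall : ε ≤ (1 - ρ) / (2 * τ)) :
    ∀ t : ℕ,
      opNorm
        ((∑ k ∈ Finset.range (t + 1),
            (σw ^ 2 • (A ^ k * (A ^ k)ᵀ) + σu ^ 2 • (A ^ k * B * Bᵀ * (A ^ k)ᵀ)))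
          - ∑ k ∈ Finset.range (t + 1),
            (σw ^ 2 • (Ahat ^ k * (Ahat ^ k)ᵀ) + σu ^ 2 • (Ahat ^ k * Bhat * Bhatᵀ * (Ahat ^ k)ᵀ)))
        ≤ (8 * (σw ^ 2 + σu ^ 2 * (opNorm B) ^ 2) * τ ^ 3 / (1 - ρ ^ 2) ^ 2
            + 4 * σu ^ 2 * opNorm B * τ ^ 2 / (1 - ρ ^ 2)) * ε
          + 2 * σu ^ 2 * τ ^ 2 * ε ^ 2 / (1 - ρ ^ 2) := by
  intro t
  simp only [opNorm_eq_l2_opNorm, fromCols_sub_fromCols] at hA hpert ⊢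
  have hAsub : ‖A - Ahat‖ ≤ ε := (l2_opNorm_le_l2_opNorm_fromCols_left _ _).trans hpert
  have hBsub : ‖B - Bhat‖ ≤ ε := (l2_opNorm_le_l2_opNorm_fromCols_right _ _).trans hpert
  have hε : 0 ≤ ε := (norm_nonneg _).trans hAsub
  have hτε : τ * ε ≤ (1 - ρ) / 2 := by
    rw [le_div_iff₀ (by positivity)] at hεsmall
    linarith
  set s := ρ + τ * ε
  have hρs : ρ ≤ s := le_add_of_nonneg_right (by positivity)
  have hgap : (1 - ρ ^ 2) / 2 ≤ 1 - s ^ 2 := by nlinarith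
  have hAhat : ∀ k, ‖Ahat ^ k‖ ≤ τ * s ^ k := norm_pow_le_of_norm_sub_le hA hAsub
  have hA' : ∀ k, ‖A ^ k‖ ≤ τ * s ^ k := fun k => (hA k).trans (by gcongr)
  have hBhat : ‖Bhat‖ ≤ ‖B‖ + ε := by linarith [norm_le_norm_add_norm_sub B Bhat]
  have hcong := l2_opNorm_sum_pow_mul_mul_conjTranspose_sub_le (noiseCovariance σw σu B)
    (noiseCovariance σw σu Bhat) hA' hAhat hAsub (hρ0.le.trans hρs) (by nlinarith) t
  simp only [conjTranspose_eq_transpose_of_trivial, ← gramian_summand_eq] at hcong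
  rw [← sum_sub_distrib]
  have hu : 0 < 1 - ρ ^ 2 := by nlinarith
  calc _ ≤ _ := hcong
    _ ≤ 2 * τ ^ 3 * ε * (σw ^ 2 + σu ^ 2 * ‖B‖ ^ 2) / ((1 - ρ ^ 2) / 2) ^ 2
          + τ ^ 2 * (σu ^ 2 * (ε * (‖B‖ + (‖B‖ + ε)))) / ((1 - ρ ^ 2) / 2) := by
        gcongr
        · exact l2_opNorm_noiseCovariance_le σw σu B
        · exact (l2_opNorm_noiseCovariance_sub_le σw σu B Bhat).trans (by gcongr)
    _ = _ := by field_simp; ring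

/-- perturbation bound for finite-horizon noise Gramians. If
`‖(A,B) − (Â,B̂)‖_op ≤ ε ≤ (1−ρ)/(2τ)` where `‖Aᵏ‖_op ≤ τ ρᵏ` for all `k`, then uniformly
in `t`, the operator-norm difference of the Gramians
`Σ_{k=0}^t (σ_w² Aᵏ(Aᵏ)ᵀ + σ_u² Aᵏ B Bᵀ (Aᵏ)ᵀ)` of the two systems is at most
`(8(σ_w² + σ_u²‖B‖²)τ³/(1−ρ²)² + 4σ_u²‖B‖τ²/(1−ρ²)) ε + 2σ_u²τ²ε²/(1−ρ²)`. -/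
theorem gramian_perturbation {d p : ℕ}
    (A Ahat : Matrix (Fin d) (Fin d) ℝ) (B Bhat : Matrix (Fin d) (Fin p) ℝ)
    (σw σu τ ρ ε : ℝ) (hσw : 0 ≤ σw) (hσu : 0 ≤ σu)
    (hρ0 : 0 < ρ) (hρ1 : ρ < 1) (hτ : 0 < τ)
    (hA : ∀ k : ℕ, opNorm (A ^ k) ≤ τ * ρ ^ k)
    (hpert : opNorm (Matrix.fromCols A B - Matrix.fromCols Ahat Bhat) ≤ ε)
    (hεsmall : ε ≤ (1 - ρ) / (2 * τ)) :
    ∀ t : ℕ,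
      opNorm
        ((∑ k ∈ Finset.range (t + 1),
            (σw ^ 2 • (A ^ k * (A ^ k)ᵀ) + σu ^ 2 • (A ^ k * B * Bᵀ * (A ^ k)ᵀ)))
          - ∑ k ∈ Finset.range (t + 1),
            (σw ^ 2 • (Ahat ^ k * (Ahat ^ k)ᵀ) + σu ^ 2 • (Ahat ^ k * Bhat * Bhatᵀ * (Ahat ^ k)ᵀ)))
        ≤ (8 * (σw ^ 2 + σu ^ 2 * (opNorm B) ^ 2) * τ ^ 3 / (1 - ρ ^ 2) ^ 2
            + 4 * σu ^ 2 * opNorm B * τ ^ 2 / (1 - ρ ^ 2)) * ε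
          + 2 * σu ^ 2 * τ ^ 2 * ε ^ 2 / (1 - ρ ^ 2) :=
  gramian_perturbation_general A Ahat B Bhat σw σu τ ρ ε hρ0 hρ1 hτ hA hpert hεsmall
end

section
/- Let A ∈ ℝ^{d×d} be stable with spectral radius ρ(A) < 1, and define ‖A‖_{H∞} := max_{ω∈[0,2π]} ‖(e^{iω}I − A)⁻¹‖_op. For any ρ with ρ(A) ≤ ρ < 1, τ(A, ρ) := sup_{k ≥ 0} ‖Aᵏ‖_op ρ^{−k} satisfies τ(A, ρ) ≤ ‖ρ⁻¹A‖_{H∞}, i.e. the transient constant is bounded by the H-infinity norm of the rescaled matrix ρ⁻¹A. -/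
/-!
Put `T = ρ⁻¹A`. Its spectrum lies in the open unit disc, so by Gelfand's formula `∑ ‖Tⁿ‖ < ∞`,
and on the unit circle the resolvent is the Neumann series
`(e^{iω} - T)⁻¹ = ∑ₙ e^{-i(n+1)ω} Tⁿ`. Hence `Tᵏ` is a Fourier coefficient of the resolvent,
`Tᵏ = (2π)⁻¹ ∫₀^{2π} e^{i(k+1)ω} (e^{iω} - T)⁻¹ dω`, and so `‖Tᵏ‖ ≤ ‖T‖_{H∞}`,
i.e. `‖Aᵏ‖ ≤ ‖ρ⁻¹A‖_{H∞} ρᵏ`.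
-/

open Matrix

open Complex Filter
open scoped Real

open scoped Pointwise in
theorem spectrum.norm_lt_one_of_mem_inv_smul {𝔸 : Type*} [Ring 𝔸] [Algebra ℂ 𝔸] {a : 𝔸} {ρ : ℝ}
    (hρ : 0 < ρ) (h : ∀ z ∈ spectrum ℂ a, ‖z‖ < ρ) :
    ∀ z ∈ spectrum ℂ ((ρ⁻¹ : ℂ) • a), ‖z‖ < 1 := by
  let u : ℂˣ := Units.mk0 (ρ⁻¹ : ℂ) (inv_ne_zero (ofReal_ne_zero.mpr hρ.ne'))
  rintro _ hz
  obtain ⟨w, hw, rfl⟩ := (spectrum.unit_smul_eq_smul a u ▸ hz : _ ∈ u • spectrum ℂ a)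
  change ‖(ρ⁻¹ : ℂ) * w‖ < 1
  rw [norm_mul, norm_inv, norm_real, Real.norm_of_nonneg hρ.le]
  exact (inv_mul_lt_one₀ hρ).mpr (h w hw)

theorem norm_inv_pow_smul_le {E : Type*} [SeminormedAddCommGroup E] [NormedSpace ℂ E] {z : ℂ}
    (hz : 1 ≤ ‖z‖) (m : ℕ) (b : E) : ‖z⁻¹ ^ m • b‖ ≤ ‖b‖ := by
  rw [norm_smul, norm_pow, norm_inv]
  exact mul_le_of_le_one_left (norm_nonneg _)
    (pow_le_one₀ (by positivity) (inv_le_one_of_one_le₀ hz))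

theorem integral_exp_int_mul_I (m : ℤ) :
    ∫ ω in (0)..(2 * π), exp (m * ω * I) = if m = 0 then (2 * π : ℂ) else 0 := by
  split_ifs with hm
  · simp [hm]
  · have hc : (m * I : ℂ) ≠ 0 := mul_ne_zero (Int.cast_ne_zero.mpr hm) I_ne_zero
    have h := integral_exp_mul_complex (a := 0) (b := 2 * π) hc
    simp only [mul_right_comm _ I] at h
    rw [h]
    push_cast
    rw [mul_zero, zero_mul, exp_zero, div_eq_zero_iff, sub_eq_zero]
    left
    convert exp_int_mul_two_pi_mul_I m using 2
    ring

theorem norm_exp_int_mul_ofReal_mul_I (m : ℤ) (ω : ℝ) : ‖exp (m * ω * I)‖ = 1 := by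
  exact_mod_cast norm_exp_ofReal_mul_I (m * ω)

section BanachAlgebra

variable {𝔸 : Type*} [NormedRing 𝔸] [NormedAlgebra ℂ 𝔸] [CompleteSpace 𝔸] {a : 𝔸}

theorem summable_norm_pow_of_spectralRadius_lt_one (ha : spectralRadius ℂ a < 1) :
    Summable fun n => ‖a ^ n‖ := by
  obtain ⟨u, hau, hu⟩ := ENNReal.lt_iff_exists_nnreal_btwn.mp ha
  have hu0 : (0 : ℝ) < u := ENNReal.coe_pos.mp (zero_le.trans_lt hau)
  have hu1 : (u : ℝ) < 1 := by exact_mod_cast hu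
  refine .of_norm_bounded_eventually_nat (summable_geometric_of_lt_one hu0.le hu1) ?_
  filter_upwards [(spectrum.pow_norm_pow_one_div_tendsto_nhds_spectralRadius a).eventually_lt_const
    hau, eventually_gt_atTop 0] with n hn hn0
  rw [← ENNReal.ofReal_coe_nnreal, ENNReal.ofReal_lt_ofReal_iff hu0, one_div,
    Real.rpow_inv_lt_iff_of_pos (norm_nonneg _) hu0.le (by positivity), Real.rpow_natCast] at hn
  rw [norm_norm]
  exact hn.le

theorem summable_norm_pow_of_forall_spectrum_lt_one (h : ∀ z ∈ spectrum ℂ a, ‖z‖ < 1) :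
    Summable fun n => ‖a ^ n‖ := by
  nontriviality 𝔸
  refine summable_norm_pow_of_spectralRadius_lt_one ?_
  exact_mod_cast spectrum.spectralRadius_lt_of_forall_lt a (r := 1) fun z hz => by
    exact_mod_cast h z hz

theorem hasSum_resolvent (ha : Summable fun n => ‖a ^ n‖) {z : ℂ} (hz : 1 ≤ ‖z‖) :
    HasSum (fun n => z⁻¹ ^ (n + 1) • a ^ n) (resolvent a z) := by
  have hz0 : z ≠ 0 := norm_pos_iff.mp (one_pos.trans_le hz)
  have hx : Summable fun n => (z⁻¹ • a) ^ n :=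
    .of_norm_bounded ha fun n => smul_pow z⁻¹ a n ▸ norm_inv_pow_smul_le hz n (a ^ n)
  have hfactor : algebraMap ℂ 𝔸 z - a = z • (1 - z⁻¹ • a) := by
    rw [smul_sub, smul_smul, mul_inv_cancel₀ hz0, one_smul, Algebra.algebraMap_eq_smul_one]
  let u : 𝔸ˣ :=
    { val := algebraMap ℂ 𝔸 z - a
      inv := z⁻¹ • ∑' n, (z⁻¹ • a) ^ n
      val_inv := by
        rw [hfactor, smul_mul_smul_comm, mul_inv_cancel₀ hz0, one_smul, hx.one_sub_mul_tsum_pow]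
      inv_val := by
        rw [hfactor, smul_mul_smul_comm, inv_mul_cancel₀ hz0, one_smul, hx.tsum_pow_mul_one_sub] }
  rw [show resolvent a z = z⁻¹ • ∑' n, (z⁻¹ • a) ^ n from Ring.inverse_unit u]
  convert hx.hasSum.const_smul z⁻¹ using 2
  rw [smul_pow, smul_smul, pow_succ']

theorem norm_resolvent_le_tsum (ha : Summable fun n => ‖a ^ n‖) {z : ℂ} (hz : 1 ≤ ‖z‖) :
    ‖resolvent a z‖ ≤ ∑' n, ‖a ^ n‖ :=
  (hasSum_resolvent ha hz).norm_le_of_bounded ha.hasSum fun _ => norm_inv_pow_smul_le hz _ _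

theorem exp_pow_smul_resolvent_eq_tsum (ha : Summable fun n => ‖a ^ n‖) (k : ℕ) (ω : ℝ) :
    exp (ω * I) ^ (k + 1) • resolvent a (exp (ω * I)) =
      ∑' n : ℕ, exp (((k : ℤ) - n : ℤ) * ω * I) • a ^ n := by
  have hres := hasSum_resolvent ha (norm_exp_ofReal_mul_I ω).ge
  rw [← hres.tsum_eq, ← hres.summable.tsum_const_smul]
  refine tsum_congr fun n => ?_
  rw [smul_smul, ← exp_neg, ← exp_nat_mul, ← exp_nat_mul, ← exp_add]
  push_cast
  ring_nf

theorem integral_exp_pow_smul_resolvent (ha : Summable fun n => ‖a ^ n‖) (k : ℕ) :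
    ∫ ω in (0)..(2 * π), exp (ω * I) ^ (k + 1) • resolvent a (exp (ω * I)) =
      (2 * π : ℂ) • a ^ k := by
  let f : ℕ → C(ℝ, 𝔸) := fun n =>
    ⟨fun ω => exp (((k : ℤ) - n : ℤ) * ω * I) • a ^ n, by fun_prop⟩
  have hf : Summable fun n =>
      ‖(f n).restrict (⟨Set.uIcc 0 (2 * π), isCompact_uIcc⟩ : TopologicalSpace.Compacts ℝ)‖ := by
    refine .of_nonneg_of_le (fun _ => norm_nonneg _) (fun n => ?_) ha
    refine (ContinuousMap.norm_le _ (norm_nonneg _)).mpr fun ω => ?_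
    simp only [f, ContinuousMap.restrict_apply, ContinuousMap.coe_mk, norm_smul,
      norm_exp_int_mul_ofReal_mul_I, one_mul, le_refl]
  have hswap := intervalIntegral.tsum_intervalIntegral_eq_of_summable_norm hf
  simp only [f, ContinuousMap.coe_mk] at hswap
  simp_rw [exp_pow_smul_resolvent_eq_tsum ha, ← hswap, intervalIntegral.integral_smul_const,
    integral_exp_int_mul_I, sub_eq_zero, Nat.cast_inj, eq_comm (a := k), ite_smul, zero_smul]
  exact tsum_ite_eq k fun n => (2 * π : ℂ) • a ^ n

theorem norm_pow_le_of_norm_resolvent_le (ha : Summable fun n => ‖a ^ n‖) {H : ℝ}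
    (hH : ∀ ω : ℝ, ‖resolvent a (exp (ω * I))‖ ≤ H) (k : ℕ) : ‖a ^ k‖ ≤ H := by
  have h := intervalIntegral.norm_integral_le_of_norm_le_const (a := 0) (b := 2 * π)
    (f := fun ω => exp (ω * I) ^ (k + 1) • resolvent a (exp (ω * I))) fun ω _ => by
      rw [norm_smul, norm_pow, norm_exp_ofReal_mul_I, one_pow, one_mul]
      exact hH ω
  rw [integral_exp_pow_smul_resolvent ha, norm_smul, sub_zero,
    abs_of_pos Real.two_pi_pos] at h
  have h2π : ‖(2 * π : ℂ)‖ = 2 * π := by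
    exact_mod_cast Real.norm_of_nonneg Real.two_pi_pos.le
  rw [h2π, mul_comm H] at h
  exact le_of_mul_le_mul_left h Real.two_pi_pos

end BanachAlgebra

theorem EuclideanSpace.norm_toLp_ofReal {n : Type*} [Fintype n] (x : EuclideanSpace ℝ n) :
    ‖WithLp.toLp 2 (fun i => (x i : ℂ))‖ = ‖x‖ := by
  simp only [EuclideanSpace.norm_eq, norm_real, Real.norm_eq_abs]

theorem opNorm_le_opNorm_map_ofReal {m n : Type*} [Fintype m] [Fintype n] [DecidableEq n]
    (M : Matrix m n ℝ) : opNorm M ≤ opNorm (M.map ofReal) := by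
  refine ContinuousLinearMap.opNorm_le_bound _ (norm_nonneg _) fun x => ?_
  have hMx : toEuclideanLin (M.map ofReal) (WithLp.toLp 2 fun i => (x i : ℂ)) =
      WithLp.toLp 2 fun i => ((toEuclideanLin M x) i : ℂ) := by
    ext i
    simp [Matrix.mulVec, dotProduct]
  calc ‖toEuclideanLin M x‖
      = ‖toEuclideanLin (M.map ofReal) (WithLp.toLp 2 fun i => (x i : ℂ))‖ := by
        rw [hMx, EuclideanSpace.norm_toLp_ofReal]
    _ ≤ opNorm (M.map ofReal) * ‖x‖ := by
        rw [← EuclideanSpace.norm_toLp_ofReal x]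
        exact (toEuclideanLin (M.map ofReal)).toContinuousLinearMap.le_opNorm _

-- Under this instance `opNorm M` is definitionally `‖M‖`, making square matrices a Banach algebra.
open scoped Matrix.Norms.L2Operator

theorem tau_le_hinf_general {d : ℕ} (A : Matrix (Fin d) (Fin d) ℝ) (ρ : ℝ)
    (hρ0 : 0 < ρ)
    (hstab : ∀ z ∈ spectrum ℂ (A.map Complex.ofReal), ‖z‖ < ρ)
    (H : ℝ)
    (hH : H = ⨆ ω : ℝ, opNorm
      ((Complex.exp ((ω : ℂ) * Complex.I) • (1 : Matrix (Fin d) (Fin d) ℂ)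
          - (ρ⁻¹ : ℂ) • A.map Complex.ofReal)⁻¹)) :
    ∀ k : ℕ, opNorm (A ^ k) ≤ H * ρ ^ k := by
  intro k
  set T : Matrix (Fin d) (Fin d) ℂ := (ρ⁻¹ : ℂ) • A.map ofReal
  have hT : Summable fun n => ‖T ^ n‖ :=
    summable_norm_pow_of_forall_spectrum_lt_one (spectrum.norm_lt_one_of_mem_inv_smul hρ0 hstab)
  have hres (ω : ℝ) :
      opNorm ((exp (ω * I) • (1 : Matrix (Fin d) (Fin d) ℂ) - T)⁻¹) =
        ‖resolvent T (exp (ω * I))‖ := by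
    rw [nonsing_inv_eq_ringInverse, resolvent, Algebra.algebraMap_eq_smul_one]
    rfl
  have hbdd : BddAbove (Set.range fun ω : ℝ => ‖resolvent T (exp (ω * I))‖) := by
    refine ⟨∑' n, ‖T ^ n‖, ?_⟩
    rintro _ ⟨ω, rfl⟩
    exact norm_resolvent_le_tsum hT (norm_exp_ofReal_mul_I ω).ge
  simp only [hres] at hH
  have hTk : T ^ k = (ρ⁻¹ : ℂ) ^ k • (A ^ k).map ofReal := by
    rw [smul_pow]
    exact congrArg _ (map_pow ofRealHom.mapMatrix A k).symm
  calc opNorm (A ^ k) ≤ opNorm ((A ^ k).map ofReal) := opNorm_le_opNorm_map_ofReal _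
    _ = ‖T ^ k‖ * ρ ^ k := by
      rw [hTk, norm_smul, norm_pow, norm_inv, norm_real, Real.norm_of_nonneg hρ0.le, inv_pow,
        mul_comm, mul_inv_cancel_left₀ (by positivity)]
      rfl
    _ ≤ H * ρ ^ k := by
      gcongr
      exact norm_pow_le_of_norm_resolvent_le hT (fun ω => hH ▸ le_ciSup hbdd ω) k

/-- if the real matrix `A` has spectral radius strictly less than `ρ < 1`
(with `ρ > 0`), then `τ(A, ρ) := sup_k ‖Aᵏ‖_op ρ^{−k}` is at most the H-infinity norm
`H := sup_ω ‖(e^{iω}I − ρ⁻¹A)⁻¹‖_op` of the rescaled matrix `ρ⁻¹A`; i.e.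
`‖Aᵏ‖_op ≤ H ρᵏ` for every `k`. -/
theorem tau_le_hinf {d : ℕ} (A : Matrix (Fin d) (Fin d) ℝ) (ρ : ℝ)
    (hρ0 : 0 < ρ) (hρ1 : ρ < 1)
    (hstab : ∀ z ∈ spectrum ℂ (A.map Complex.ofReal), ‖z‖ < ρ)
    (H : ℝ)
    (hH : H = ⨆ ω : ℝ, opNorm
      ((Complex.exp ((ω : ℂ) * Complex.I) • (1 : Matrix (Fin d) (Fin d) ℂ)
          - (ρ⁻¹ : ℂ) • A.map Complex.ofReal)⁻¹)) :
    ∀ k : ℕ, opNorm (A ^ k) ≤ H * ρ ^ k :=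
  tau_le_hinf_general A ρ hρ0 hstab H hH
end
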